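/- For n ≥ 4, the automaton 𝒟''_n is synchronizing, the word (b a^{n-1})^{n-3} b a of length n² - 3n + 2 resets it, and its reset threshold is exactly n² - 3n + 2. -/
import Mathlib

/-- The state reached from `q` by reading the word `w`. -/
def run {Q A : Type*} (δ : Q → A → Q) (q : Q) (w : List A) : Q := w.foldl δ q

/-- The automaton `𝒟''_n` on states `0,…,n-1` (paper's `1,…,n` shifted by one):
the letter `a` (= `true`) sends `i ↦ i+1` for `i < n-2` and `n-2 ↦ 0`, `n-1 ↦ 0`;
the letter `b` (= `false`) sends `i ↦ i+1` for `i < n-1` and `n-1 ↦ 1`. -/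
def d2Aut (n : ℕ) (q : ZMod n) : Bool → ZMod n
  | true => if q.val = n - 2 then 0 else if q.val = n - 1 then 0 else q + 1
  | false => if q.val = n - 1 then 1 else q + 1

lemma run_nil {Q A : Type*} (δ : Q → A → Q) (q : Q) : run δ q [] = q := rfl

lemma run_cons {Q A : Type*} (δ : Q → A → Q) (q : Q) (x : A) (l : List A) :
    run δ q (x :: l) = run δ (δ q x) l := rfl

lemma run_append {Q A : Type*} (δ : Q → A → Q) (q : Q) (u v : List A) :
    run δ q (u ++ v) = run δ (run δ q u) v := List.foldl_append ..

section D2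
variable {n : ℕ} (hn : 4 ≤ n)
include hn

lemma vcast {v : ℕ} (hv : v < n) : ((v : ZMod n)).val = v := by
  haveI : NeZero n := ⟨by omega⟩
  exact ZMod.val_cast_of_lt hv

lemma step_a {v : ℕ} (hv : v < n - 2) :
    d2Aut n (v : ZMod n) true = ((v + 1 : ℕ) : ZMod n) := by
  simp only [d2Aut, vcast hn (by omega : v < n)]
  rw [if_neg (by omega), if_neg (by omega)]
  push_cast; ring

lemma step_a_top {v : ℕ} (hv : v = n - 2 ∨ v = n - 1) :
    d2Aut n (v : ZMod n) true = 0 := by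
  simp only [d2Aut, vcast hn (by omega : v < n)]
  rcases hv with h | h
  · rw [if_pos h]
  · rw [if_neg (by omega), if_pos h]

lemma step_b {v : ℕ} (hv : v < n - 1) :
    d2Aut n (v : ZMod n) false = ((v + 1 : ℕ) : ZMod n) := by
  simp only [d2Aut, vcast hn (by omega : v < n)]
  rw [if_neg (by omega)]
  push_cast; ring

lemma step_b_top : d2Aut n ((n - 1 : ℕ) : ZMod n) false = ((1 : ℕ) : ZMod n) := by
  simp only [d2Aut, vcast hn (by omega : n - 1 < n)]
  norm_num

lemma run_a_repl (k : ℕ) : ∀ v : ℕ, v + k ≤ n - 2 →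
    run (d2Aut n) (v : ZMod n) (List.replicate k true) = ((v + k : ℕ) : ZMod n) := by
  induction k with
  | zero => intro v _; simp [run]
  | succ k ih =>
    intro v hv
    rw [List.replicate_succ, run_cons, step_a hn (by omega), ih (v + 1) (by omega)]
    congr 1; omega

lemma run_b_repl (k : ℕ) : ∀ v : ℕ, v + k ≤ n - 1 →
    run (d2Aut n) (v : ZMod n) (List.replicate k false) = ((v + k : ℕ) : ZMod n) := by
  induction k with
  | zero => intro v _; simp [run]
  | succ k ih =>
    intro v hv
    rw [List.replicate_succ, run_cons, step_b hn (by omega), ih (v + 1) (by omega)]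
    congr 1; omega

lemma run_a_cycle {v : ℕ} (hv : v ≤ n - 1) :
    run (d2Aut n) (v : ZMod n) (List.replicate (n - 1) true)
      = ((min v (n - 2) : ℕ) : ZMod n) := by
  rcases eq_or_lt_of_le hv with h | h
  · -- v = n - 1
    have h1 : n - 1 = (n - 2) + 1 := by omega
    rw [h1, List.replicate_succ, run_cons, h, step_a_top hn (Or.inr rfl)]
    have h0 : (0 : ZMod n) = ((0 : ℕ) : ZMod n) := by norm_num
    rw [h0, run_a_repl hn (n - 2) 0 (by omega)]
    congr 1; omega
  · -- v ≤ n - 2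
    have hv2 : v ≤ n - 2 := by omega
    have h1 : n - 1 = (n - 2 - v) + (v + 1) := by omega
    rw [h1, List.replicate_add, run_append, run_a_repl hn (n - 2 - v) v (by omega)]
    have h2 : v + (n - 2 - v) = n - 2 := by omega
    rw [h2, List.replicate_succ, run_cons, step_a_top hn (Or.inl rfl)]
    have h0 : (0 : ZMod n) = ((0 : ℕ) : ZMod n) := by norm_num
    rw [h0, run_a_repl hn v 0 (by omega)]
    congr 1; omega

lemma run_blk {v : ℕ} (hv : v ≤ n - 1) :
    run (d2Aut n) (v : ZMod n) (false :: List.replicate (n - 1) true)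
      = (((if v = n - 1 then 1 else min (v + 1) (n - 2)) : ℕ) : ZMod n) := by
  rw [run_cons]
  by_cases h : v = n - 1
  · rw [h, step_b_top hn, run_a_cycle hn (by omega), if_pos rfl]
    congr 1; omega
  · rw [step_b hn (by omega), run_a_cycle hn (by omega : v + 1 ≤ n - 1), if_neg h]

lemma run_blocks (k : ℕ) : ∀ v : ℕ, 1 ≤ v → v ≤ n - 2 →
    run (d2Aut n) (v : ZMod n)
        (List.replicate k (false :: List.replicate (n - 1) true)).flatten
      = ((min (v + k) (n - 2) : ℕ) : ZMod n) := by
  induction k with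
  | zero =>
    intro v h1 h2; simp [run]
    congr 1; omega
  | succ k ih =>
    intro v h1 h2
    rw [List.replicate_succ, List.flatten_cons, run_append, run_blk hn (by omega),
      if_neg (by omega), ih (min (v + 1) (n - 2)) (by omega) (by omega)]
    congr 1; omega

/-- The reset word sends every state to 0. -/
lemma run_w (q : ZMod n) :
    run (d2Aut n) q
      ((List.replicate (n - 3) (false :: List.replicate (n - 1) true)).flatten
        ++ [false, true]) = 0 := by
  haveI : NeZero n := ⟨by omega⟩
  have hq : ((q.val : ℕ) : ZMod n) = q := ZMod.natCast_rightInverse q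
  have hqlt : q.val ≤ n - 1 := by have := ZMod.val_lt q; omega
  rw [← hq, run_append]
  have h1 : n - 3 = (n - 4) + 1 := by omega
  rw [h1, List.replicate_succ, List.flatten_cons, run_append, run_blk hn hqlt]
  set v1 : ℕ := if q.val = n - 1 then 1 else min (q.val + 1) (n - 2) with hv1
  have hv1a : 1 ≤ v1 := by rw [hv1]; split <;> omega
  have hv1b : v1 ≤ n - 2 := by rw [hv1]; split <;> omega
  rw [run_blocks hn (n - 4) v1 hv1a hv1b]
  set v2 : ℕ := min (v1 + (n - 4)) (n - 2) with hv2
  have hv2a : n - 3 ≤ v2 := by rw [hv2]; omega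
  have hv2b : v2 ≤ n - 2 := by rw [hv2]; omega
  show run (d2Aut n) _ [false, true] = 0
  rw [run_cons, step_b hn (by omega), run_cons, step_a_top hn (by omega), run_nil]

/-- Length invariant: words from any state satisfy a Frobenius-type relation. -/
lemma run_inv (u : List Bool) : ∀ q : ZMod n,
    ∃ a b : ℕ, q.val + u.length = (run (d2Aut n) q u).val + a * (n - 1) + b * n := by
  haveI : NeZero n := ⟨by omega⟩
  induction u with
  | nil => intro q; exact ⟨0, 0, by simp [run]⟩
  | cons x u ih =>
    intro q
    obtain ⟨a, b, h⟩ := ih (d2Aut n q x)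
    rw [run_cons]
    have hq : ((q.val : ℕ) : ZMod n) = q := ZMod.natCast_rightInverse q
    have hqlt : q.val < n := ZMod.val_lt q
    generalize hA : a * (n - 1) = A at h
    generalize hB : b * n = B at h
    rcases lt_or_ge q.val (n - 2) with hv | hv
    · -- both letters move q.val to q.val+1
      have hx : (d2Aut n q x).val = q.val + 1 := by
        cases x
        · rw [← hq, step_b hn (by omega), vcast hn (by omega), vcast hn hqlt]
        · rw [← hq, step_a hn hv, vcast hn (by omega), vcast hn hqlt]
      rw [hx] at h
      exact ⟨a, b, by rw [hA, hB]; simp only [List.length_cons]; omega⟩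
    · rcases eq_or_lt_of_le hv with hv2 | hv2
      · -- q.val = n-2
        cases x
        · have hx : (d2Aut n q false).val = n - 1 := by
            rw [← hq, ← hv2, step_b hn (by omega), vcast hn (by omega)]
            omega
          rw [hx] at h
          exact ⟨a, b, by rw [hA, hB]; simp only [List.length_cons]; omega⟩
        · have hx : (d2Aut n q true).val = 0 := by
            rw [← hq, step_a_top hn (Or.inl hv2.symm)]
            exact ZMod.val_zero
          rw [hx] at h
          refine ⟨a + 1, b, ?_⟩
          rw [add_mul, one_mul, hA, hB]; simp only [List.length_cons]; omega
      · -- q.val = n-1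
        have hv3 : q.val = n - 1 := by omega
        cases x
        · have hx : (d2Aut n q false).val = 1 := by
            rw [← hq, hv3, step_b_top hn, vcast hn (by omega)]
            
          rw [hx] at h
          refine ⟨a + 1, b, ?_⟩
          rw [add_mul, one_mul, hA, hB]; simp only [List.length_cons]; omega
        · have hx : (d2Aut n q true).val = 0 := by
            rw [← hq, hv3, step_a_top hn (Or.inr rfl)]
            exact ZMod.val_zero
          rw [hx] at h
          refine ⟨a, b + 1, ?_⟩
          rw [add_mul, one_mul, hA, hB]; simp only [List.length_cons]; omega

end D2

/-- For `n ≥ 4`, the automaton `𝒟''_n` is synchronizing, the word `(b a^{n-1})^{n-3} b a`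
of length `n² - 3n + 2` resets it, and its reset threshold is exactly `n² - 3n + 2`. -/
theorem stmt_14 (n : ℕ) (hn : 4 ≤ n) :
    let w : List Bool :=
      (List.replicate (n - 3) (false :: List.replicate (n - 1) true)).flatten
      ++ [false, true]
    w.length = n ^ 2 - 3 * n + 2 ∧
    (∃ p : ZMod n, ∀ q, run (d2Aut n) q w = p) ∧
    (∀ v : List Bool, (∃ p : ZMod n, ∀ q, run (d2Aut n) q v = p) →
      n ^ 2 - 3 * n + 2 ≤ v.length) := by
  haveI : NeZero n := ⟨by omega⟩
  refine ⟨?_, ⟨0, fun q => run_w hn q⟩, ?_⟩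
  · -- length computation
    simp only [List.length_append, List.length_flatten, List.map_replicate,
      List.length_cons, List.length_replicate, List.sum_replicate, smul_eq_mul,
      List.length_nil]
    have h1 : n - 1 + 1 = n := by omega
    rw [h1]
    have key : (n - 3) * n = n ^ 2 - 3 * n := by
      have h3 : n ^ 2 = n * n := sq n
      rw [Nat.sub_mul, h3]
    omega
  · -- lower bound
    rintro v ⟨p, hp⟩
    by_contra hlen
    push_neg at hlen
    -- build a word of length n^2 - 2n from 0 to n-1
    have h3 : n ^ 2 = n * n := sq n
    have h4 : 3 * n ≤ n * n := by nlinarith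
    set P : ℕ := p.val with hP
    have hPlt : P < n := ZMod.val_lt p
    set t : ℕ := v.length with ht
    have htle : t ≤ n * n - 3 * n + 1 := by omega
    set s : List Bool := List.replicate (n - 1 - P) false with hs
    set pad : List Bool := List.replicate (n * n - 2 * n - t - (n - 1 - P)) false with hpad
    set u : List Bool := pad ++ v ++ s with hu
    have hulen : u.length = n * n - 2 * n := by
      simp only [hu, List.length_append, hpad, hs, List.length_replicate, ← ht]
      omega
    have hrun : run (d2Aut n) (0 : ZMod n) u = ((n - 1 : ℕ) : ZMod n) := by
      rw [hu, run_append, run_append, hp]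
      rw [hs, ← ZMod.natCast_rightInverse p, run_b_repl hn (n - 1 - P) P (by omega)]
      congr 1; omega
    obtain ⟨a, b, hab⟩ := run_inv hn u (0 : ZMod n)
    rw [hrun, hulen, ZMod.val_zero, vcast hn (by omega : n - 1 < n)] at hab
    -- n*n - 2*n = (n-1) + a*(n-1) + b*n, impossible
    have hZ : (n : ℤ) * n - 2 * n = (n - 1) + a * (n - 1) + b * n := by
      have := hab
      zify [show 2 * n ≤ n * n by nlinarith, show 1 ≤ n by omega] at this ⊢
      linarith
    have hdvd : (b : ℤ) + 1 = ((n : ℤ) - 1) * ((n - 2) - a - b) := by linear_combination -hZ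
    have hfac : (1 : ℤ) ≤ (n - 2) - a - b := by
      by_contra hf
      push_neg at hf
      have h1 : ((n : ℤ) - 1) * ((n - 2) - a - b) ≤ 0 := by
        apply mul_nonpos_of_nonneg_of_nonpos
        · have : (4 : ℤ) ≤ n := by exact_mod_cast hn
          linarith
        · linarith
      have : (0 : ℤ) < b + 1 := by positivity
      linarith
    have hbig : (n : ℤ) - 1 ≤ (b : ℤ) + 1 := by
      rw [hdvd]
      have h4 : (4 : ℤ) ≤ n := by exact_mod_cast hn
      nlinarith
    have hb2 : (n : ℤ) - 2 ≤ b := by linarith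
    have h4 : (4 : ℤ) ≤ n := by exact_mod_cast hn
    have hbn : ((n : ℤ) - 2) * n ≤ (b : ℤ) * n := by
      apply mul_le_mul_of_nonneg_right hb2 (by linarith)
    have hexp : ((n : ℤ) - 2) * n = n * n - 2 * n := by ring
    have hanneg : (0 : ℤ) ≤ (a : ℤ) * ((n : ℤ) - 1) := by
      apply mul_nonneg (by positivity) (by linarith)
    linarith
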